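/- arXiv:2507.23728 — 5 statements merged into one kernel-verified Lean document; each statement's English description precedes it below -/
import Mathlib

section
/- Schwartz–Zippel lemma: Let R be an integral domain, S a finite subset of R, and f a nonzero polynomial in R[x_1,...,x_n] of total degree at most d. Then the number of points in S^n at which f vanishes is at most d * |S|^{n-1}. -/
open MvPolynomial Finset

theorem MvPolynomial.card_zeros_piFinset_le_totalDegree_mul {R : Type*} [CommRing R] [IsDomain R]
    [DecidableEq R] {n : ℕ} {p : MvPolynomial (Fin (n + 1)) R} (hp : p ≠ 0) (S : Finset R) :
    #{x ∈ Fintype.piFinset fun _ ↦ S | eval x p = 0} ≤ p.totalDegree * #S ^ n := by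
  obtain rfl | hS := S.eq_empty_or_nonempty
  · simp
  have hS : (0 : ℚ≥0) < #S := by exact_mod_cast hS.card_pos
  have h := schwartz_zippel_totalDegree hp S
  rw [div_le_div_iff₀ (by positivity) hS] at h
  have h' : (#{x ∈ Fintype.piFinset fun _ ↦ S | eval x p = 0} : ℚ≥0) * #S ≤
      (p.totalDegree * #S ^ n : ℚ≥0) * #S := by
    rw [mul_assoc, ← pow_succ]
    exact h
  exact_mod_cast le_of_mul_le_mul_right h' hS

/-- Schwartz–Zippel lemma: a nonzero polynomial of total degree at most `d` over an
integral domain vanishes on at most `d * |S|^(n-1)` points of `S^n`. -/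
theorem schwartz_zippel {R : Type*} [CommRing R] [IsDomain R] [DecidableEq R]
    (n d : ℕ) (S : Finset R) (f : MvPolynomial (Fin n) R) (hf : f ≠ 0)
    (hd : f.totalDegree ≤ d) :
    ((Fintype.piFinset fun _ : Fin n => S).filter
        fun x => MvPolynomial.eval x f = 0).card ≤ d * S.card ^ (n - 1) := by
  cases n with
  | zero =>
    obtain ⟨a, rfl⟩ := C_surjective (Fin 0) f
    simp [show a ≠ 0 by simpa using hf]
  | succ m =>
    calc _ ≤ f.totalDegree * #S ^ m := card_zeros_piFinset_le_totalDegree_mul hf S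
      _ ≤ d * #S ^ m := by gcongr
end

section
/- The Motzkin polynomial M(x,y,z) = x^4 y^2 + x^2 y^4 + z^6 - 3 x^2 y^2 z^2 is not a sum of squares of polynomials in R[x,y,z]. -/
/-!
If `M = ∑ qᵢ²`, then for every weight `w` on the variables the top `w`-homogeneous components
of the `qᵢ` square to the top component of `M`; over an ordered field a sum of squares of
nonzero polynomials does not vanish, so every exponent of every `qᵢ` has `w`-weight at most half
the maximal `w`-weight of `M`. For the weights `(1,1,1)`, `(3,0,2)` and `(0,3,2)` this confines
the exponents of the `qᵢ` so tightly that `(1,1,1) + (1,1,1)` is the only way to write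
`(2,2,2)` as a sum of two of them. Hence the coefficient of `x²y²z²` in `∑ qᵢ²` is
`∑ coeff_{xyz}(qᵢ)² ≥ 0`, whereas in `M` it is `-3`.
-/

open MvPolynomial Finset
open Finsupp (single weight)

namespace MvPolynomial

variable {σ R ι : Type*}

theorem eq_zero_of_sum_sq_eq_zero [CommRing R] [LinearOrder R] [IsStrictOrderedRing R]
    {s : Finset ι} {p : ι → MvPolynomial σ R} (h : ∑ j ∈ s, p j ^ 2 = 0) {i : ι}
    (hi : i ∈ s) : p i = 0 := by
  refine funext fun x => ?_
  have hx : ∑ j ∈ s, eval x (p j) ^ 2 = 0 := by simpa using congrArg (eval x) h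
  simpa using (sum_eq_zero_iff_of_nonneg fun j _ => sq_nonneg _).mp hx i hi

theorem coeff_eq_zero_of_weightedTotalDegree_lt [CommSemiring R] {w : σ → ℕ}
    {p : MvPolynomial σ R} {d : σ →₀ ℕ} (h : weightedTotalDegree w p < weight w d) :
    coeff d p = 0 :=
  notMem_support_iff.mp fun hd => (le_weightedTotalDegree w hd).not_gt h

theorem weightedHomogeneousComponent_mul_of_le [CommSemiring R] (w : σ → ℕ) {D E : ℕ}
    {p q : MvPolynomial σ R} (hp : weightedTotalDegree w p ≤ D)
    (hq : weightedTotalDegree w q ≤ E) :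
    weightedHomogeneousComponent w (D + E) (p * q) =
      weightedHomogeneousComponent w D p * weightedHomogeneousComponent w E q := by
  have key : ∀ u v : σ →₀ ℕ, weight w u + weight w v = D + E →
      coeff u p * coeff v q =
        (if weight w u = D then coeff u p else 0) * (if weight w v = E then coeff v q else 0) := by
    intro u v huv
    rcases lt_trichotomy (weight w u) D with h | h | h
    · rw [coeff_eq_zero_of_weightedTotalDegree_lt (w := w) (d := v) (by omega)]
      simp
    · simp [h, show weight w v = E by omega]
    · rw [coeff_eq_zero_of_weightedTotalDegree_lt (w := w) (d := u) (by omega)]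
      simp
  classical
  ext n
  rw [coeff_weightedHomogeneousComponent, coeff_mul, coeff_mul]
  simp only [coeff_weightedHomogeneousComponent]
  split_ifs with hn
  · refine sum_congr rfl fun uv huv => key uv.1 uv.2 ?_
    rw [← map_add, mem_antidiagonal.mp huv, hn]
  · refine (sum_eq_zero fun uv huv => ?_).symm
    have : weight w uv.1 + weight w uv.2 ≠ D + E := by
      rwa [← map_add, mem_antidiagonal.mp huv]
    split_ifs <;> simp_all

theorem weightedHomogeneousComponent_weightedTotalDegree_ne_zero [CommSemiring R] (w : σ → ℕ)
    {p : MvPolynomial σ R} (hp : p ≠ 0) :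
    weightedHomogeneousComponent w (weightedTotalDegree w p) p ≠ 0 := by
  classical
  obtain ⟨d, hd, hdeg⟩ := exists_mem_eq_sup p.support (support_nonempty.mpr hp) (weight w)
  refine ne_of_apply_ne (coeff d) ?_
  have hd' : weight w d = weightedTotalDegree w p := hdeg.symm
  rw [coeff_weightedHomogeneousComponent, if_pos hd']
  exact mem_support_iff.mp hd

theorem two_mul_weightedTotalDegree_le_sum_sq [CommRing R] [LinearOrder R]
    [IsStrictOrderedRing R] (w : σ → ℕ) (s : Finset ι) (p : ι → MvPolynomial σ R) {i : ι}
    (hi : i ∈ s) :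
    2 * weightedTotalDegree w (p i) ≤ weightedTotalDegree w (∑ j ∈ s, p j ^ 2) := by
  obtain ⟨j, hj, hD⟩ := exists_mem_eq_sup s ⟨i, hi⟩ fun j => weightedTotalDegree w (p j)
  set D := s.sup fun j => weightedTotalDegree w (p j)
  have hle : ∀ k ∈ s, weightedTotalDegree w (p k) ≤ D :=
    fun k hk => le_sup (f := fun j => weightedTotalDegree w (p j)) hk
  suffices D + D ≤ weightedTotalDegree w (∑ j ∈ s, p j ^ 2) by linarith [hle i hi]
  by_contra! hlt
  have hpj : p j ≠ 0 := by
    intro hpj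
    rw [hpj, weightedTotalDegree_zero] at hD
    simp [hD] at hlt
  have hsum : ∑ k ∈ s, weightedHomogeneousComponent w D (p k) ^ 2 = 0 := by
    rw [← weightedHomogeneousComponent_eq_zero _ _ hlt, map_sum]
    refine sum_congr rfl fun k hk => ?_
    rw [sq, sq, weightedHomogeneousComponent_mul_of_le w (hle k hk) (hle k hk)]
  exact weightedHomogeneousComponent_weightedTotalDegree_ne_zero w hpj
    (hD ▸ eq_zero_of_sum_sq_eq_zero hsum hj)

theorem coeff_add_self_sum_sq [CommSemiring R] (s : Finset ι) (p : ι → MvPolynomial σ R)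
    (m : σ →₀ ℕ) (h : ∀ i ∈ s, ∀ u v, u + v = m + m →
      u ∈ (p i).support → v ∈ (p i).support → u = m) :
    coeff (m + m) (∑ i ∈ s, p i ^ 2) = ∑ i ∈ s, coeff m (p i) ^ 2 := by
  classical
  rw [coeff_sum]
  refine sum_congr rfl fun i hi => ?_
  rw [sq, sq, coeff_mul]
  refine sum_eq_single_of_mem (m, m) (mem_antidiagonal.mpr rfl) fun ⟨u, v⟩ huv hne => ?_
  by_contra hc
  have huv : u + v = m + m := mem_antidiagonal.mp huv
  obtain rfl := h i hi u v huv (mem_support_iff.mpr (left_ne_zero_of_mul hc))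
    (mem_support_iff.mpr (right_ne_zero_of_mul hc))
  exact hne (by rw [add_left_cancel huv])

end MvPolynomial

noncomputable def motzkin : MvPolynomial (Fin 3) ℝ :=
  X 0 ^ 4 * X 1 ^ 2 + X 0 ^ 2 * X 1 ^ 4 + X 2 ^ 6 - 3 * X 0 ^ 2 * X 1 ^ 2 * X 2 ^ 2

theorem motzkin_eq_sum_monomial :
    motzkin = monomial (single 0 4 + single 1 2) 1 + monomial (single 0 2 + single 1 4) 1
      + monomial (single 2 6) 1 - monomial (single 0 2 + single 1 2 + single 2 2) 3 := by
  simp only [motzkin, X_pow_eq_monomial, monomial_mul, one_mul]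
  rw [show (3 : MvPolynomial (Fin 3) ℝ) = C 3 from rfl]
  simp [C_mul_monomial]

theorem support_motzkin_subset :
    motzkin.support ⊆ {single 0 4 + single 1 2, single 0 2 + single 1 4, single 2 6,
      single 0 2 + single 1 2 + single 2 2} := by
  rw [motzkin_eq_sum_monomial]
  refine (support_sub _ _ _).trans (union_subset (support_add.trans (union_subset
    (support_add.trans (union_subset ?_ ?_)) ?_)) ?_) <;>
  exact support_monomial_subset.trans (by simp)

theorem weightedTotalDegree_motzkin_le (w : Fin 3 → ℕ) :
    weightedTotalDegree w motzkin ≤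
      max (max (4 * w 0 + 2 * w 1) (2 * w 0 + 4 * w 1))
        (max (6 * w 2) (2 * w 0 + 2 * w 1 + 2 * w 2)) := by
  refine Finset.sup_le fun m hm => ?_
  have hm := support_motzkin_subset hm
  simp only [mem_insert, mem_singleton] at hm
  rcases hm with rfl | rfl | rfl | rfl <;> simp [Finsupp.weight_single]

/-- Half-spaces cut out by the weights `(1,1,1)`, `(3,0,2)`, `(0,3,2)` that contain half the
Newton polytope `conv {(2,1,0), (1,2,0), (0,0,3)}` of `motzkin`. -/
def MotzkinHalfNewton (u : Fin 3 →₀ ℕ) : Prop :=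
  u 0 + u 1 + u 2 ≤ 3 ∧ 3 * u 0 + 2 * u 2 ≤ 6 ∧ 3 * u 1 + 2 * u 2 ≤ 6

theorem motzkinHalfNewton_of_motzkin_eq_sum_sq {ι : Type*} {s : Finset ι}
    {q : ι → MvPolynomial (Fin 3) ℝ} (h : motzkin = ∑ i ∈ s, q i ^ 2) {i : ι}
    (hi : i ∈ s) {u : Fin 3 →₀ ℕ} (hu : u ∈ (q i).support) : MotzkinHalfNewton u := by
  have key (w : Fin 3 → ℕ) : 2 * (w 0 * u 0 + w 1 * u 1 + w 2 * u 2) ≤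
      max (max (4 * w 0 + 2 * w 1) (2 * w 0 + 4 * w 1))
        (max (6 * w 2) (2 * w 0 + 2 * w 1 + 2 * w 2)) :=
    calc 2 * (w 0 * u 0 + w 1 * u 1 + w 2 * u 2) = 2 * weight w u := by
          simp [Finsupp.weight_apply, Finsupp.sum_fintype, Fin.sum_univ_three, mul_comm]
      _ ≤ 2 * weightedTotalDegree w (q i) := by gcongr; exact le_weightedTotalDegree w hu
      _ ≤ weightedTotalDegree w motzkin := h ▸ two_mul_weightedTotalDegree_le_sum_sq w s q hi
      _ ≤ _ := weightedTotalDegree_motzkin_le w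
  have h₁ : 2 * (u 0 + u 1 + u 2) ≤ 6 := by simpa using key ![1, 1, 1]
  have h₂ : 2 * (3 * u 0 + 2 * u 2) ≤ 12 := by simpa using key ![3, 0, 2]
  have h₃ : 2 * (3 * u 1 + 2 * u 2) ≤ 12 := by simpa using key ![0, 3, 2]
  exact ⟨by omega, by omega, by omega⟩

noncomputable abbrev xyzExponent : Fin 3 →₀ ℕ := Finsupp.equivFunOnFinite.symm 1

theorem coeff_motzkin_xyzExponent_add_self :
    coeff (xyzExponent + xyzExponent) motzkin = -3 := by
  rw [motzkin_eq_sum_monomial]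
  simp [coeff_monomial, Finsupp.ext_iff, Fin.forall_fin_succ]

theorem eq_xyzExponent_of_add_eq {u v : Fin 3 →₀ ℕ} (huv : u + v = xyzExponent + xyzExponent)
    (hu : MotzkinHalfNewton u) (hv : MotzkinHalfNewton v) : u = xyzExponent := by
  have h (j : Fin 3) : u j + v j = 2 := by simpa using DFunLike.congr_fun huv j
  have h₀ := h 0
  have h₁ := h 1
  have h₂ := h 2
  obtain ⟨hu₁, hu₂, hu₃⟩ := hu
  obtain ⟨hv₁, hv₂, hv₃⟩ := hv
  obtain ⟨e₀, e₁, e₂⟩ : u 0 = 1 ∧ u 1 = 1 ∧ u 2 = 1 := by omega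
  ext j
  fin_cases j <;> simp [e₀, e₁, e₂]

/-- The Motzkin polynomial is not a sum of squares of polynomials in `ℝ[x,y,z]`. -/
theorem motzkin_not_sos :
    ¬ ∃ (k : ℕ) (q : Fin k → MvPolynomial (Fin 3) ℝ),
        (X 0) ^ 4 * (X 1) ^ 2 + (X 0) ^ 2 * (X 1) ^ 4 + (X 2) ^ 6 -
            3 * (X 0) ^ 2 * (X 1) ^ 2 * (X 2) ^ 2 =
          ∑ i, (q i) ^ 2 := by
  rintro ⟨k, q, hq⟩
  change motzkin = _ at hq
  have hcoeff : coeff (xyzExponent + xyzExponent) motzkin = ∑ i, coeff xyzExponent (q i) ^ 2 := by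
    rw [hq]
    refine coeff_add_self_sum_sq _ _ _ fun i hi u v huv hu hv => eq_xyzExponent_of_add_eq huv
      (motzkinHalfNewton_of_motzkin_eq_sum_sq hq hi hu)
      (motzkinHalfNewton_of_motzkin_eq_sum_sq hq hi hv)
  have hnonneg : 0 ≤ ∑ i, coeff xyzExponent (q i) ^ 2 := sum_nonneg fun i _ => sq_nonneg _
  rw [coeff_motzkin_xyzExponent_add_self] at hcoeff
  linarith
end

section
/- If a symmetric polynomial f in R[x_1, x_2] is a sum of squares of polynomials, then f can be written as f = f_1 + (x_1 - x_2)^2 f_2, where f_1 and f_2 are sums of squares of symmetric polynomials. -/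
/-!
Write `s` for the swap of the two variables. Every `q` splits as `q = u + (x₁ - x₂) v` with `u, v`
symmetric: `u = (q + s q)/2`, and `q - s q` is antisymmetric, hence divisible by `x₁ - x₂` with a
symmetric quotient. Then `s q = u - (x₁ - x₂) v`, and the mixed terms cancel in
`q² + (s q)² = 2 (u² + (x₁ - x₂)² v²)`. Summing over the squares of an SOS representation of a
symmetric `f`, the left side becomes `f + s f = 2 f`.
-/

open MvPolynomial

namespace MvPolynomial

section Swap

variable {R σ : Type*} [CommRing R] [DecidableEq σ] {a b : σ}

theorem rename_swap_rename_swap (p : MvPolynomial σ R) :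
    rename (Equiv.swap a b) (rename (Equiv.swap a b) p) = p := by
  rw [rename_rename, ← Equiv.coe_trans, Equiv.swap_swap, Equiv.coe_refl, rename_id_apply]

theorem rename_swap_X_sub_X :
    rename (Equiv.swap a b) (X a - X b : MvPolynomial σ R) = -(X a - X b) := by
  simp

theorem X_sub_X_dvd_sub_rename_swap (p : MvPolynomial σ R) :
    X a - X b ∣ p - rename (Equiv.swap a b) p := by
  induction p using MvPolynomial.induction_on with
  | C r => simp
  | add p q hp hq =>
    rw [map_add, add_sub_add_comm]
    exact dvd_add hp hq
  | mul_X p i hp =>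
    have hXi : (X a - X b : MvPolynomial σ R) ∣ X i - X (Equiv.swap a b i) := by
      rcases eq_or_ne i a with rfl | hia
      · simp
      rcases eq_or_ne i b with hib | hib
      · rw [hib, Equiv.swap_apply_right]
        exact dvd_sub_comm.mp dvd_rfl
      · simp [Equiv.swap_apply_of_ne_of_ne hia hib]
    have : p * X i - rename (Equiv.swap a b) (p * X i)
        = (p - rename (Equiv.swap a b) p) * X i
          + rename (Equiv.swap a b) p * (X i - X (Equiv.swap a b i)) := by
      rw [map_mul, rename_X]; ring
    rw [this]
    exact dvd_add (hp.mul_right _) (hXi.mul_left _)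

variable [IsDomain R]

theorem exists_sub_rename_swap_eq_X_sub_X_mul (hab : a ≠ b) (q : MvPolynomial σ R) :
    ∃ t, rename (Equiv.swap a b) t = t ∧ q - rename (Equiv.swap a b) q = (X a - X b) * t := by
  obtain ⟨t, ht⟩ := X_sub_X_dvd_sub_rename_swap (a := a) (b := b) q
  refine ⟨t, mul_left_cancel₀ (sub_ne_zero.mpr (X_injective.ne hab)) ?_, ht⟩
  have hst := congrArg (rename (Equiv.swap a b)) ht
  rw [map_sub, rename_swap_rename_swap, map_mul, rename_swap_X_sub_X] at hst
  linear_combination ht + hst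

theorem exists_rename_swap_eq_add_X_sub_X_mul [Invertible (2 : R)] (hab : a ≠ b)
    (q : MvPolynomial σ R) :
    ∃ u v, rename (Equiv.swap a b) u = u ∧ rename (Equiv.swap a b) v = v ∧
      q = u + (X a - X b) * v ∧ rename (Equiv.swap a b) q = u - (X a - X b) * v := by
  obtain ⟨t, hts, ht⟩ := exists_sub_rename_swap_eq_X_sub_X_mul hab q
  have h2 : (C (⅟2 : R) : MvPolynomial σ R) * 2 = 1 := by
    rw [← map_ofNat C 2, ← C_mul, invOf_mul_self, C_1]
  refine ⟨C ⅟2 * (q + rename (Equiv.swap a b) q), C ⅟2 * t, ?_, ?_, ?_, ?_⟩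
  · rw [map_mul, map_add, rename_C, rename_swap_rename_swap, add_comm q]
  · rw [map_mul, rename_C, hts]
  · linear_combination C (⅟2 : R) * ht - q * h2
  · linear_combination -C (⅟2 : R) * ht - rename (Equiv.swap a b) q * h2

end Swap

theorem isSymmetric_iff_rename_swap {R : Type*} [CommSemiring R] {p : MvPolynomial (Fin 2) R} :
    p.IsSymmetric ↔ rename (Equiv.swap 0 1) p = p := by
  refine ⟨fun h => h _, fun h τ => ?_⟩
  obtain rfl | rfl : τ = 1 ∨ τ = Equiv.swap 0 1 := by revert τ; decide
  · exact rename_id_apply p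
  · exact h

end MvPolynomial

/-- A symmetric sum of squares in `ℝ[x₁,x₂]` can be written as
`f₁ + (x₁ - x₂)² f₂` where `f₁, f₂` are sums of squares of symmetric polynomials. -/
theorem symmetric_sos_decomposition (f : MvPolynomial (Fin 2) ℝ)
    (hf : f.IsSymmetric)
    (hsos : ∃ (k : ℕ) (q : Fin k → MvPolynomial (Fin 2) ℝ), f = ∑ i, (q i) ^ 2) :
    ∃ f₁ f₂ : MvPolynomial (Fin 2) ℝ,
      (∃ (k : ℕ) (q : Fin k → MvPolynomial (Fin 2) ℝ),
        (∀ i, (q i).IsSymmetric) ∧ f₁ = ∑ i, (q i) ^ 2) ∧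
      (∃ (k : ℕ) (q : Fin k → MvPolynomial (Fin 2) ℝ),
        (∀ i, (q i).IsSymmetric) ∧ f₂ = ∑ i, (q i) ^ 2) ∧
      f = f₁ + (X 0 - X 1) ^ 2 * f₂ := by
  obtain ⟨k, q, rfl⟩ := hsos
  choose u v hu hv hq hsq using fun i =>
    exists_rename_swap_eq_add_X_sub_X_mul (by decide : (0 : Fin 2) ≠ 1) (q i)
  refine ⟨∑ i, u i ^ 2, ∑ i, v i ^ 2, ⟨k, u, fun i => isSymmetric_iff_rename_swap.mpr (hu i), rfl⟩,
    ⟨k, v, fun i => isSymmetric_iff_rename_swap.mpr (hv i), rfl⟩, ?_⟩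
  have hsum : ∑ i, rename (Equiv.swap 0 1) (q i) ^ 2 = ∑ i, q i ^ 2 := by
    simpa only [map_sum, map_pow] using isSymmetric_iff_rename_swap.mp hf
  refine mul_left_cancel₀ (two_ne_zero (α := MvPolynomial (Fin 2) ℝ)) ?_
  calc 2 * ∑ i, q i ^ 2 = ∑ i, (q i ^ 2 + rename (Equiv.swap 0 1) (q i) ^ 2) := by
        rw [Finset.sum_add_distrib, hsum, two_mul]
    _ = ∑ i, 2 * (u i ^ 2 + (X 0 - X 1) ^ 2 * v i ^ 2) := by
        refine Finset.sum_congr rfl fun i _ => ?_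
        rw [hsq i, hq i]
        ring
    _ = 2 * (∑ i, u i ^ 2 + (X 0 - X 1) ^ 2 * ∑ i, v i ^ 2) := by
        rw [← Finset.mul_sum, Finset.sum_add_distrib, Finset.mul_sum]
end

section
/- The polynomial f(x_1, x_2) = x_1^2 - 2 x_1 x_2 + x_2^2 is symmetric and is a sum of squares in R[x_1, x_2], but it is not a sum of squares of symmetric polynomials. -/
open MvPolynomial

/-!
Restricting to the antidiagonal `x₂ = -x₁` turns `f` into `4t²` and every symmetric `q` into an
even polynomial `q(t, -t)`. An even polynomial has no linear term, and a real sum of squares equal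
to `4t²` vanishes at `0`, so each `q(t, -t)` is divisible by `t²`; the sum of their squares would
then be divisible by `t⁴`.
-/

namespace Polynomial

variable {R ι : Type*}

theorem coeff_comp_neg_X [CommRing R] (p : R[X]) (n : ℕ) :
    (p.comp (-X)).coeff n = (-1) ^ n * p.coeff n := by
  induction p using Polynomial.induction_on' with
  | add p q hp hq => simp [add_comp, hp, hq, mul_add]
  | monomial k a =>
    rw [monomial_comp, neg_pow, ← C_1, ← C_neg, ← C_pow, ← mul_assoc, ← C_mul, coeff_C_mul_X_pow,
      coeff_monomial]
    split_ifs <;> simp_all [mul_comm]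

theorem coeff_one_eq_zero_of_comp_neg_X_eq [CommRing R] [IsAddTorsionFree R] {p : R[X]}
    (hp : p.comp (-X) = p) : p.coeff 1 = 0 := by
  have h := congrArg (coeff · 1) hp
  simp only [coeff_comp_neg_X, pow_one, neg_one_mul] at h
  exact neg_eq_self.mp h

theorem sum_sq_ne_C_mul_X_sq [CommRing R] [LinearOrder R] [IsStrictOrderedRing R]
    (s : Finset ι) {g : ι → R[X]} (hg : ∀ i ∈ s, (g i).comp (-X) = g i) {c : R} (hc : c ≠ 0) :
    ∑ i ∈ s, g i ^ 2 ≠ C c * X ^ 2 := by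
  intro h
  have hcoeff_zero : ∀ i ∈ s, (g i).coeff 0 = 0 := by
    have h0 := congrArg (coeff · 0) h
    simp only [finsetSum_coeff, sq, mul_coeff_zero] at h0
    exact (Finset.sum_mul_self_eq_zero_iff s _).mp (by simpa using h0)
  have hX_sq_dvd : ∀ i ∈ s, X ^ 2 ∣ g i := fun i hi => X_pow_dvd_iff.mpr fun d hd => by
    interval_cases d
    · exact hcoeff_zero i hi
    · exact coeff_one_eq_zero_of_comp_neg_X_eq (hg i hi)
  have hX_pow_four_dvd : (X : R[X]) ^ 4 ∣ C c * X ^ 2 :=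
    h ▸ Finset.dvd_sum fun i hi => by
      simpa [← pow_mul] using pow_dvd_pow_of_dvd (hX_sq_dvd i hi) 2
  simpa [coeff_C_mul_X_pow, hc] using X_pow_dvd_iff.mp hX_pow_four_dvd 2 (by norm_num)

end Polynomial

namespace MvPolynomial

variable {R : Type*}

theorem isSymmetric_fin_two_iff [CommSemiring R] {q : MvPolynomial (Fin 2) R} :
    q.IsSymmetric ↔ rename (Equiv.swap 0 1) q = q := by
  refine ⟨fun hq => hq _, fun hq σ => ?_⟩
  obtain rfl | rfl : σ = Equiv.refl _ ∨ σ = Equiv.swap 0 1 := by revert σ; decide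
  · exact rename_id_apply q
  · exact hq

theorem IsSymmetric.comp_neg_X_aeval [CommRing R] {q : MvPolynomial (Fin 2) R}
    (hq : q.IsSymmetric) :
    (aeval ![(Polynomial.X : Polynomial R), -Polynomial.X] q).comp (-Polynomial.X) =
      aeval ![(Polynomial.X : Polynomial R), -Polynomial.X] q := by
  have hswap : (Polynomial.aeval (-Polynomial.X : Polynomial R)).comp
      (aeval ![(Polynomial.X : Polynomial R), -Polynomial.X]) =
      aeval (![Polynomial.X, -Polynomial.X] ∘ Equiv.swap 0 1) := by
    ext j; fin_cases j <;> simp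
  rw [Polynomial.comp_eq_aeval, ← AlgHom.comp_apply, hswap, ← aeval_rename, hq]

end MvPolynomial

/-- `f = x₁² - 2x₁x₂ + x₂²` is symmetric and a sum of squares in `ℝ[x₁,x₂]`,
but not a sum of squares of symmetric polynomials. -/
theorem symmetric_sos_not_symmetric_squares :
    ((X 0) ^ 2 - 2 * X 0 * X 1 + (X 1) ^ 2 : MvPolynomial (Fin 2) ℝ).IsSymmetric ∧
    (∃ (k : ℕ) (q : Fin k → MvPolynomial (Fin 2) ℝ),
      ((X 0) ^ 2 - 2 * X 0 * X 1 + (X 1) ^ 2 : MvPolynomial (Fin 2) ℝ) = ∑ i, (q i) ^ 2) ∧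
    ¬ ∃ (k : ℕ) (q : Fin k → MvPolynomial (Fin 2) ℝ),
        (∀ i, (q i).IsSymmetric) ∧
        ((X 0) ^ 2 - 2 * X 0 * X 1 + (X 1) ^ 2 : MvPolynomial (Fin 2) ℝ) = ∑ i, (q i) ^ 2 := by
  refine ⟨?_, ⟨1, ![X 0 - X 1], by rw [Fin.sum_univ_one, Matrix.cons_val_zero]; ring⟩, ?_⟩
  · rw [isSymmetric_fin_two_iff]
    simp only [map_add, map_sub, map_mul, map_pow, map_ofNat, rename_X, Equiv.swap_apply_left,
      Equiv.swap_apply_right]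
    ring
  · rintro ⟨k, q, hq, hf⟩
    have h := congrArg (aeval ![(Polynomial.X : Polynomial ℝ), -Polynomial.X]) hf
    simp only [map_add, map_sub, map_mul, map_pow, map_ofNat, map_sum, aeval_X, Matrix.cons_val_zero,
      Matrix.cons_val_one, Matrix.cons_val_fin_one, mul_neg, sub_neg_eq_add, even_two,
      Even.neg_pow] at h
    refine Polynomial.sum_sq_ne_C_mul_X_sq Finset.univ
      (fun i _ => IsSymmetric.comp_neg_X_aeval (hq i)) (four_ne_zero (α := ℝ)) ?_
    rw [← h, map_ofNat]
    ring
end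

section
/- For any even m >= 1 and any rational coefficients gamma_0,...,gamma_{2m-1}, the polynomial p_{2m} + sum_{i=0}^{2m-1} gamma_i p_i, where p_i = x_1^i + ... + x_n^i is the i-th power sum, is a proper map from R^n to R. -/
open MvPolynomial Finset

/-- For even `m ≥ 1` and rational coefficients `γ_0, …, γ_{2m-1}`, the map
`x ↦ p_{2m}(x) + ∑_{i<2m} γ_i p_i(x)` is proper from `ℝⁿ` to `ℝ`. -/
theorem power_sum_perturbation_proper (n m : ℕ) (hm : 1 ≤ m) (hme : Even m)
    (γ : Fin (2 * m) → ℚ) :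
    ∀ K : Set ℝ, IsCompact K →
      IsCompact ((fun x : Fin n → ℝ =>
        MvPolynomial.eval x
          (psum (Fin n) ℝ (2 * m) + ∑ i : Fin (2 * m), (γ i : ℝ) • psum (Fin n) ℝ i)) ⁻¹' K) := by
  intro K hK
  set f : (Fin n → ℝ) → ℝ :=
    fun x => (∑ j, x j ^ (2 * m)) + ∑ i : Fin (2 * m), (γ i : ℝ) * ∑ j, x j ^ (i : ℕ) with hf
  have hfun : (fun x : Fin n → ℝ =>
      MvPolynomial.eval x
        (psum (Fin n) ℝ (2 * m) + ∑ i : Fin (2 * m), (γ i : ℝ) • psum (Fin n) ℝ i)) = f := by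
    funext x
    simp [hf, psum, MvPolynomial.eval_sum]
  rw [hfun]
  have hcont : Continuous f := by
    apply Continuous.add
    · exact continuous_finset_sum _ fun j _ => (continuous_apply j).pow _
    · exact continuous_finset_sum _ fun i _ =>
        (continuous_const.mul (continuous_finset_sum _ fun j _ => (continuous_apply j).pow _))
  obtain ⟨B0, hB0⟩ := (Bornology.IsBounded.exists_norm_le hK.isBounded)
  set B : ℝ := max B0 0 with hBdef
  have hB : ∀ y ∈ K, ‖y‖ ≤ B := fun y hy => le_trans (hB0 y hy) (le_max_left _ _)
  have hBnn : (0:ℝ) ≤ B := le_max_right _ _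
  rw [Metric.isCompact_iff_isClosed_bounded]
  refine ⟨hK.isClosed.preimage hcont, ?_⟩
  rw [isBounded_iff_forall_norm_le]
  set C : ℝ := n * ∑ i : Fin (2 * m), |(γ i : ℝ)| with hCdef
  have hCnn : 0 ≤ C := mul_nonneg (Nat.cast_nonneg n) (Finset.sum_nonneg fun i _ => abs_nonneg _)
  refine ⟨max 1 (C + B), fun x hx => ?_⟩
  by_contra h
  push_neg at h
  have h1 : (1:ℝ) < ‖x‖ := lt_of_le_of_lt (le_max_left _ _) h
  have hCB : C + B < ‖x‖ := lt_of_le_of_lt (le_max_right _ _) h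
  have hnpos : 0 < n := by
    rcases Nat.eq_zero_or_pos n with h0 | h0
    · exfalso
      subst h0
      have hx0 : x = 0 := funext fun i => (Nat.not_lt_zero _ i.2).elim
      rw [hx0, norm_zero] at h1
      linarith
    · exact h0
  -- lower bound on the leading sum
  have hlow : ‖x‖ ^ (2 * m) ≤ ∑ j, x j ^ (2 * m) := by
    obtain ⟨j, -, hj⟩ := Finset.exists_max_image Finset.univ (fun j => |x j|)
      ⟨⟨0, hnpos⟩, Finset.mem_univ _⟩
    have hxj : ‖x‖ ≤ |x j| := by
      refine (pi_norm_le_iff_of_nonneg (abs_nonneg _)).mpr fun k => ?_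
      simpa [Real.norm_eq_abs] using hj k (Finset.mem_univ _)
    calc ‖x‖ ^ (2 * m) ≤ |x j| ^ (2 * m) := pow_le_pow_left₀ (norm_nonneg x) hxj _
      _ = x j ^ (2 * m) := (even_two_mul m).pow_abs _
      _ ≤ ∑ j', x j' ^ (2 * m) := Finset.single_le_sum (f := fun j' => x j' ^ (2 * m))
          (fun j' _ => (even_two_mul m).pow_nonneg _) (Finset.mem_univ j)
  -- upper bound on the perturbations
  have hup : ∀ i : Fin (2 * m), |∑ j, x j ^ (i : ℕ)| ≤ n * ‖x‖ ^ (2 * m - 1) := by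
    intro i
    calc |∑ j, x j ^ (i : ℕ)| ≤ ∑ j, |x j ^ (i : ℕ)| := Finset.abs_sum_le_sum_abs _ _
      _ ≤ ∑ _j : Fin n, ‖x‖ ^ (2 * m - 1) := by
          refine Finset.sum_le_sum fun j _ => ?_
          rw [abs_pow]
          calc |x j| ^ (i : ℕ) ≤ ‖x‖ ^ (i : ℕ) :=
                pow_le_pow_left₀ (abs_nonneg _) (by simpa [Real.norm_eq_abs] using norm_le_pi_norm x j) _
            _ ≤ ‖x‖ ^ (2 * m - 1) := pow_le_pow_right₀ h1.le (by omega)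
      _ = n * ‖x‖ ^ (2 * m - 1) := by simp [mul_comm]
  have hpert : |∑ i : Fin (2 * m), (γ i : ℝ) * ∑ j, x j ^ (i : ℕ)| ≤ C * ‖x‖ ^ (2 * m - 1) := by
    calc |∑ i : Fin (2 * m), (γ i : ℝ) * ∑ j, x j ^ (i : ℕ)|
        ≤ ∑ i : Fin (2 * m), |(γ i : ℝ) * ∑ j, x j ^ (i : ℕ)| := Finset.abs_sum_le_sum_abs _ _
      _ ≤ ∑ i : Fin (2 * m), |(γ i : ℝ)| * (n * ‖x‖ ^ (2 * m - 1)) := by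
          refine Finset.sum_le_sum fun i _ => ?_
          rw [abs_mul]
          exact mul_le_mul_of_nonneg_left (hup i) (abs_nonneg _)
      _ = (∑ i : Fin (2 * m), |(γ i : ℝ)|) * (n * ‖x‖ ^ (2 * m - 1)) := by
          rw [← Finset.sum_mul]
      _ = C * ‖x‖ ^ (2 * m - 1) := by rw [hCdef]; ring
  have hpowpos : (0:ℝ) < ‖x‖ ^ (2 * m - 1) := pow_pos (by linarith) _
  have hpow1 : (1:ℝ) ≤ ‖x‖ ^ (2 * m - 1) := one_le_pow₀ h1.le
  have hsplit : ‖x‖ ^ (2 * m) = ‖x‖ ^ (2 * m - 1) * ‖x‖ := by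
    rw [← pow_succ]
    congr 1
    omega
  have hfx : B < f x := by
    have h2 : -(C * ‖x‖ ^ (2 * m - 1)) ≤ ∑ i : Fin (2 * m), (γ i : ℝ) * ∑ j, x j ^ (i : ℕ) :=
      neg_le_of_abs_le hpert
    have h3 : ‖x‖ ^ (2 * m - 1) * (‖x‖ - C) ≤ f x := by
      have hfx' : f x = (∑ j, x j ^ (2 * m)) + ∑ i : Fin (2 * m), (γ i : ℝ) * ∑ j, x j ^ (i : ℕ) := rfl
      rw [hfx']
      nlinarith [hlow, h2, hsplit]
    have h4 : ‖x‖ - C > B := by linarith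
    calc B < 1 * (‖x‖ - C) := by linarith
      _ ≤ ‖x‖ ^ (2 * m - 1) * (‖x‖ - C) := by
          apply mul_le_mul_of_nonneg_right hpow1; linarith
      _ ≤ f x := h3
  have hfxK : f x ∈ K := hx
  have := hB (f x) hfxK
  rw [Real.norm_eq_abs] at this
  have := le_abs_self (f x)
  linarith
end
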